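/- Let R = ℤ[t]/(t⁴ − t³ + t² − t + 1) with τ the image of t. If k₁, k₂, k₁′, k₂′ ∈ ℕ, i ∈ ℕ, ε ∈ {1, −1} and (1 + τ)^{k₁}·(1 − τ)^{k₂} = ε·τⁱ·(1 + τ)^{k₁′}·(1 − τ)^{k₂′} in R, then k₁ = k₁′ and k₂ = k₂′. -/

import Mathlib

/-!
Map `τ` to the primitive tenth roots of unity `z = exp (iπ/5)` and `z³` and take absolute values.
As `ε` and `τ` go to numbers of modulus one, the vector `(k₁ - k₁', k₂ - k₂')` is orthogonal to
`(log |1 + w|, log |1 - w|)` for `w = z, z³`. Since `|1 ± w|² = 2 ± 2 Re w`, `Re z = cos (π/5) > 1/2`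
and `Re z³ = 1/2 - cos (π/5) ∈ (-1/2, 0)`, these vectors have sign patterns `(+, -)` and `(+, +)`,
so they are linearly independent.
-/

open Complex Polynomial
open scoped Real

theorem eq_and_eq_of_pow_mul_pow_eq {a b c d : ℝ} (ha : 1 < a) (hb₀ : 0 < b) (hb : b < 1)
    (hc : 1 < c) (hd : 1 < d) {m n m' n' : ℕ}
    (hab : a ^ m * b ^ n = a ^ m' * b ^ n') (hcd : c ^ m * d ^ n = c ^ m' * d ^ n') :
    m = m' ∧ n = n' := by
  have log_eq : ∀ {x y : ℝ}, 0 < x → 0 < y → x ^ m * y ^ n = x ^ m' * y ^ n' →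
      ((m : ℝ) - m') * Real.log x + ((n : ℝ) - n') * Real.log y = 0 := by
    intro x y hx hy h
    have := congrArg Real.log h
    rw [Real.log_mul (by positivity) (by positivity), Real.log_mul (by positivity) (by positivity),
      Real.log_pow, Real.log_pow, Real.log_pow, Real.log_pow] at this
    linear_combination this
  have e₁ := log_eq (by linarith) hb₀ hab
  have e₂ := log_eq (by linarith) (by linarith) hcd
  have hA := Real.log_pos ha
  have hB := Real.log_neg hb₀ hb
  have hC := Real.log_pos hc
  have hD := Real.log_pos hd
  have hm : ((m : ℝ) - m') * (Real.log a * Real.log d - Real.log c * Real.log b) = 0 := by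
    linear_combination Real.log d * e₁ - Real.log b * e₂
  have hm : (m : ℝ) - m' = 0 :=
    (mul_eq_zero.mp hm).resolve_right (by nlinarith [mul_pos hA hD, mul_pos hC (neg_pos.mpr hB)])
  rw [hm, zero_mul, zero_add] at e₁
  have hn : (n : ℝ) - n' = 0 := (mul_eq_zero.mp e₁).resolve_right hB.ne
  exact ⟨by exact_mod_cast sub_eq_zero.mp hm, by exact_mod_cast sub_eq_zero.mp hn⟩

theorem cyclotomic_ten_eval_eq_zero {R : Type*} [CommRing R] [NoZeroDivisors R] {z : R}
    (h₅ : z ^ 5 = -1) (hz : z ≠ -1) : z ^ 4 - z ^ 3 + z ^ 2 - z + 1 = 0 := by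
  have : (z + 1) * (z ^ 4 - z ^ 3 + z ^ 2 - z + 1) = 0 := by linear_combination h₅
  exact (mul_eq_zero.mp this).resolve_left fun h => hz (eq_neg_of_add_eq_zero_left h)

theorem Complex.norm_one_add_sq {z : ℂ} (hz : ‖z‖ = 1) : ‖1 + z‖ ^ 2 = 2 + 2 * z.re := by
  have := congrArg (· ^ 2) hz
  simp only [Complex.sq_norm, one_pow] at this ⊢
  simp only [normSq_apply, add_re, add_im, one_re, one_im] at this ⊢
  linear_combination this

theorem Complex.norm_one_sub_sq {z : ℂ} (hz : ‖z‖ = 1) : ‖1 - z‖ ^ 2 = 2 - 2 * z.re := by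
  simpa [sub_eq_add_neg] using norm_one_add_sq (z := -z) (by simpa using hz)

theorem Complex.one_lt_norm_one_add {z : ℂ} (hz : ‖z‖ = 1) (hre : -1 / 2 < z.re) :
    1 < ‖1 + z‖ := by
  rw [← one_lt_sq_iff₀ (norm_nonneg _), norm_one_add_sq hz]
  linarith

theorem Complex.one_lt_norm_one_sub {z : ℂ} (hz : ‖z‖ = 1) (hre : z.re < 1 / 2) :
    1 < ‖1 - z‖ := by
  rw [← one_lt_sq_iff₀ (norm_nonneg _), norm_one_sub_sq hz]
  linarith

theorem Complex.norm_one_sub_lt_one {z : ℂ} (hz : ‖z‖ = 1) (hre : 1 / 2 < z.re) :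
    ‖1 - z‖ < 1 := by
  rw [← sq_lt_one_iff₀ (norm_nonneg _), norm_one_sub_sq hz]
  linarith

theorem Real.cos_pi_div_five_mem_Ioo : Real.cos (π / 5) ∈ Set.Ioo (1 / 2) 1 := by
  rw [Real.cos_pi_div_five]
  have h₁ : (1 : ℝ) < √5 := by rw [Real.lt_sqrt] <;> norm_num
  have h₃ : √5 < 3 := by rw [Real.sqrt_lt'] <;> norm_num
  constructor <;> linarith

theorem Real.cos_three_mul_pi_div_five : Real.cos (3 * (π / 5)) = 1 / 2 - Real.cos (π / 5) := by
  rw [Real.cos_three_mul]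
  linear_combination (Real.cos (π / 5) + 1 / 2) * Real.quadratic_root_cos_pi_div_five

theorem Complex.exp_pi_div_five_mul_I_pow_pow_five {k : ℕ} (hk : Odd k) :
    (exp (↑(π / 5) * I) ^ k) ^ 5 = -1 := by
  have h₅ : exp (↑(π / 5) * I) ^ 5 = -1 := by
    rw [← exp_nat_mul, ← exp_pi_mul_I]
    push_cast
    ring_nf
  rw [← pow_mul, mul_comm k, pow_mul, h₅, hk.neg_one_pow]

theorem Complex.exp_pi_div_five_mul_I_pow_three :
    exp (↑(π / 5) * I) ^ 3 = exp (↑(3 * (π / 5)) * I) := by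
  rw [← exp_nat_mul]
  push_cast
  ring_nf

theorem exists_ringHom_quotient_span_singleton {R S : Type*} [CommRing R] [CommRing S]
    {f : R[X]} (i : R →+* S) {x : S} (hx : f.eval₂ i x = 0) :
    ∃ φ : R[X] ⧸ Ideal.span {f} →+* S, φ (Ideal.Quotient.mk _ X) = x :=
  ⟨AdjoinRoot.lift i x hx, AdjoinRoot.lift_root hx⟩

theorem norm_pow_mul_pow_eq_of_eq_mul {A : Type*} [CommRing A] (φ : A →+* ℂ) {τ ε : A}
    (hτ : ‖φ τ‖ = 1) (hε : ε = 1 ∨ ε = -1) {k₁ k₂ k₁' k₂' i : ℕ}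
    (h : (1 + τ) ^ k₁ * (1 - τ) ^ k₂ = ε * τ ^ i * ((1 + τ) ^ k₁' * (1 - τ) ^ k₂')) :
    ‖1 + φ τ‖ ^ k₁ * ‖1 - φ τ‖ ^ k₂ = ‖1 + φ τ‖ ^ k₁' * ‖1 - φ τ‖ ^ k₂' := by
  have hφε : ‖φ ε‖ = 1 := by rcases hε with rfl | rfl <;> simp
  simpa [hτ, hφε] using congrArg (‖φ ·‖) h

open Polynomial in
theorem stmt_10 (I : Ideal (Polynomial ℤ))
    (hI : I = Ideal.span ({X ^ 4 - X ^ 3 + X ^ 2 - X + 1} : Set (Polynomial ℤ)))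
    (τ : Polynomial ℤ ⧸ I) (hτ : τ = Ideal.Quotient.mk I X)
    (k₁ k₂ k₁' k₂' i : ℕ) (ε : Polynomial ℤ ⧸ I) (hε : ε = 1 ∨ ε = -1)
    (h : (1 + τ) ^ k₁ * (1 - τ) ^ k₂ = ε * τ ^ i * ((1 + τ) ^ k₁' * (1 - τ) ^ k₂')) :
    k₁ = k₁' ∧ k₂ = k₂' := by
  subst hI hτ
  have norm_eq : ∀ z : ℂ, ‖z‖ = 1 → z ^ 4 - z ^ 3 + z ^ 2 - z + 1 = 0 →
      ‖1 + z‖ ^ k₁ * ‖1 - z‖ ^ k₂ = ‖1 + z‖ ^ k₁' * ‖1 - z‖ ^ k₂' := by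
    intro z hz hroot
    obtain ⟨φ, rfl⟩ := exists_ringHom_quotient_span_singleton (Int.castRingHom ℂ)
      (f := X ^ 4 - X ^ 3 + X ^ 2 - X + 1) (x := z) (by simpa using hroot)
    exact norm_pow_mul_pow_eq_of_eq_mul φ hz hε h
  obtain ⟨hc_gt, hc_lt⟩ := Real.cos_pi_div_five_mem_Ioo
  set z := exp (↑(π / 5) * I)
  have hz : ‖z‖ = 1 := norm_exp_ofReal_mul_I _
  have hz₃ : ‖z ^ 3‖ = 1 := by rw [norm_pow, hz, one_pow]
  have hre : z.re = Real.cos (π / 5) := exp_ofReal_mul_I_re _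
  have hre₃ : (z ^ 3).re = 1 / 2 - Real.cos (π / 5) := by
    rw [exp_pi_div_five_mul_I_pow_three, exp_ofReal_mul_I_re, Real.cos_three_mul_pi_div_five]
  have ne_neg_one : ∀ w : ℂ, -1 < w.re → w ≠ -1 := fun w hw h => by simp [h] at hw
  have root := cyclotomic_ten_eval_eq_zero (pow_one z ▸ exp_pi_div_five_mul_I_pow_pow_five odd_one)
    (ne_neg_one z (by linarith))
  have root₃ := cyclotomic_ten_eval_eq_zero (exp_pi_div_five_mul_I_pow_pow_five (by decide))
    (ne_neg_one (z ^ 3) (by linarith))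
  have hz₁ : z ≠ 1 := fun h => by rw [h, one_re] at hre; linarith
  exact eq_and_eq_of_pow_mul_pow_eq (one_lt_norm_one_add hz (by linarith))
    (norm_pos_iff.2 (sub_ne_zero.2 hz₁.symm)) (norm_one_sub_lt_one hz (by linarith))
    (one_lt_norm_one_add hz₃ (by linarith)) (one_lt_norm_one_sub hz₃ (by linarith))
    (norm_eq z hz root) (norm_eq _ hz₃ root₃)
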